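/- arXiv:1911.12402 — 3 statements merged into one kernel-verified Lean document; each statement's English description precedes it below -/
import Mathlib

section
/- Let ν be a Borel probability measure on [0,1] and let (X_i)_{i≥1} be i.i.d. random variables with law ν; write X̄_m = (X₁+⋯+X_m)/m. If for some m₁ ∈ ℕ, m₁ ≥ 1, one has E[X̄_{m₁}/(1−X̄_{m₁})] < 1, then for every m₂ ≥ m₁ one also has E[X̄_{m₂}/(1−X̄_{m₂})] < 1. (In terms of the condensation criterion, if the Bianconi–Barabási model BB(m₁) with fitness law ν^{(m₁)} condensates, then BB(m₂) condensates.) -/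
/-!
For `m₁ ≤ m₂`, the mean of `X₀, …, X_{m₂-1}` is the average, over the `m₁`-element subsets `S`,
of the means over `S`, because every index lies in the same number of such subsets. Since
`t ↦ t / (1 - t)` is convex on `[0, 1)`, Jensen's inequality bounds `X̄_{m₂} / (1 - X̄_{m₂})` by the
average of the corresponding ratios of the subset means (if a subset mean equals `1`, that
average is `∞`).
By independence and identical distribution each subset mean has the law of `X̄_{m₁}`, so taking
expectations gives `E[X̄_{m₂} / (1 - X̄_{m₂})] ≤ E[X̄_{m₁} / (1 - X̄_{m₁})]`.
-/

open MeasureTheory ProbabilityTheory Filter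
open scoped ENNReal

/-- The "condensation integral" `E[X̄_m / (1 - X̄_m)]`, computed in `[0,∞]`
(with the convention `x/(1-x) = ∞` when `x = 1`, realised via `ℝ≥0∞` division),
where `X̄_m = (X₁ + ⋯ + X_m)/m`. -/
noncomputable def meanRatioInt {Ω : Type*} [MeasurableSpace Ω] (μ : Measure Ω)
    (X : ℕ → Ω → ℝ) (m : ℕ) : ℝ≥0∞ :=
  ∫⁻ ω, ENNReal.ofReal ((∑ i ∈ Finset.range m, X i ω) / m) /
    ENNReal.ofReal (1 - (∑ i ∈ Finset.range m, X i ω) / m) ∂μ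

open Finset

noncomputable def odds (t : ℝ) : ℝ≥0∞ := ENNReal.ofReal t / ENNReal.ofReal (1 - t)

@[fun_prop]
lemma measurable_odds : Measurable odds := by
  unfold odds; fun_prop

lemma odds_of_lt_one {t : ℝ} (ht : t < 1) : odds t = ENNReal.ofReal (t / (1 - t)) :=
  (ENNReal.ofReal_div_of_pos (sub_pos.2 ht)).symm

lemma odds_one : odds 1 = ⊤ := by
  simp [odds]

lemma meanRatioInt_eq_lintegral_odds {Ω : Type*} [MeasurableSpace Ω] (μ : Measure Ω)
    (X : ℕ → Ω → ℝ) (m : ℕ) :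
    meanRatioInt μ X m = ∫⁻ ω, odds ((∑ i ∈ range m, X i ω) / m) ∂μ :=
  rfl

lemma convexOn_div_one_sub : ConvexOn ℝ (Set.Iio 1) fun t : ℝ => t / (1 - t) := by
  have h := ((convexOn_zpow (𝕜 := ℝ) (-1)).comp_affineMap
    (AffineMap.const ℝ ℝ (1 : ℝ) - AffineMap.id ℝ ℝ)).add_const (-1)
  rw [show (AffineMap.const ℝ ℝ (1 : ℝ) - AffineMap.id ℝ ℝ) ⁻¹' Set.Ioi 0 = Set.Iio 1 by
    ext; simp] at h
  refine h.congr fun t ht => ?_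
  have : (1 : ℝ) - t ≠ 0 := sub_ne_zero.2 (ne_of_gt ht)
  change (1 - t) ^ (-1 : ℤ) + -1 = t / (1 - t)
  field_simp
  ring

lemma odds_sum_div_card_le {α : Type*} {s : Finset α} (hs : s.Nonempty) {y : α → ℝ}
    (hy : ∀ a ∈ s, y a ∈ Set.Icc 0 1) :
    odds ((∑ a ∈ s, y a) / #s) ≤ (∑ a ∈ s, odds (y a)) / #s := by
  by_cases hone : ∃ a ∈ s, y a = 1
  · obtain ⟨a, ha, hya⟩ := hone
    rw [ENNReal.sum_eq_top.2 ⟨a, ha, hya ▸ odds_one⟩,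
      ENNReal.top_div_of_ne_top (ENNReal.natCast_ne_top _)]
    exact le_top
  push Not at hone
  have hlt : ∀ a ∈ s, y a < 1 := fun a ha => (hy a ha).2.lt_of_ne (hone a ha)
  have hcard : (0 : ℝ) < #s := by exact_mod_cast hs.card_pos
  have hmean : (∑ a ∈ s, y a) / #s < 1 := by
    rw [div_lt_one hcard]
    simpa using sum_lt_sum_of_nonempty hs hlt
  have jensen := convexOn_div_one_sub.map_sum_le (t := s) (w := fun _ => (#s : ℝ)⁻¹) (p := y)
    (fun _ _ => by positivity) (by simp [hcard.ne']) hlt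
  simp only [smul_eq_mul, inv_mul_eq_div, ← sum_div] at jensen
  have hratio_nonneg : ∀ a ∈ s, 0 ≤ y a / (1 - y a) :=
    fun a ha => div_nonneg (hy a ha).1 (sub_nonneg.2 (hy a ha).2)
  calc odds ((∑ a ∈ s, y a) / #s)
      = ENNReal.ofReal ((∑ a ∈ s, y a) / #s / (1 - (∑ a ∈ s, y a) / #s)) := odds_of_lt_one hmean
    _ ≤ ENNReal.ofReal ((∑ a ∈ s, y a / (1 - y a)) / #s) := ENNReal.ofReal_le_ofReal jensen
    _ = (∑ a ∈ s, odds (y a)) / #s := by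
      rw [ENNReal.ofReal_div_of_pos hcard, ENNReal.ofReal_sum_of_nonneg hratio_nonneg,
        ENNReal.ofReal_natCast, sum_congr rfl fun a ha => (odds_of_lt_one (hlt a ha)).symm]

lemma Finset.sum_powersetCard_succ_sum {α M : Type*} [DecidableEq α] [AddCommMonoid M]
    (s : Finset α) (m : ℕ) (x : α → M) :
    ∑ S ∈ s.powersetCard (m + 1), ∑ i ∈ S, x i = (#s - 1).choose m • ∑ i ∈ s, x i := by
  calc ∑ S ∈ s.powersetCard (m + 1), ∑ i ∈ S, x i
      = ∑ S ∈ s.powersetCard (m + 1), ∑ i ∈ s, if i ∈ S then x i else 0 := by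
        refine sum_congr rfl fun S hS => ?_
        rw [sum_ite_mem, inter_eq_right.2 (mem_powersetCard.1 hS).1]
    _ = ∑ i ∈ s, #{S ∈ s.powersetCard (m + 1) | i ∈ S} • x i := by
        rw [sum_comm]
        simp only [sum_ite, sum_const_zero, add_zero, sum_const]
    _ = (#s - 1).choose m • ∑ i ∈ s, x i := by
        rw [smul_sum]
        refine sum_congr rfl fun i hi => ?_
        simp_rw [← singleton_subset_iff (a := i)]
        rw [card_filter_powersetCard_subset _ _ _ (singleton_subset_iff.2 hi) (by simp),
          card_singleton, Nat.add_sub_cancel]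

lemma sum_div_card_eq_sum_powersetCard_div {α : Type*} (s : Finset α) {m : ℕ} (hm : 0 < m)
    (hms : m ≤ #s) (x : α → ℝ) :
    (∑ i ∈ s, x i) / #s = (∑ S ∈ s.powersetCard m, (∑ i ∈ S, x i) / m) / #(s.powersetCard m) := by
  classical
  obtain ⟨k, rfl⟩ := Nat.exists_eq_add_one_of_ne_zero hm.ne'
  obtain ⟨n, hn⟩ := Nat.exists_eq_add_one_of_ne_zero (by omega : #s ≠ 0)
  have hchoose : ((n + 1 : ℕ) : ℝ) * n.choose k = ((n + 1).choose (k + 1) : ℕ) * (k + 1 : ℕ) := by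
    exact_mod_cast Nat.add_one_mul_choose_eq n k
  have hchoose_ne : ((n + 1).choose (k + 1) : ℝ) ≠ 0 := by
    exact_mod_cast (Nat.choose_pos (by omega)).ne'
  rw [← sum_div, sum_powersetCard_succ_sum, card_powersetCard, hn, nsmul_eq_mul,
    Nat.add_sub_cancel]
  field_simp
  push_cast at hchoose ⊢
  linear_combination -(∑ i ∈ s, x i) * hchoose

lemma sum_div_card_mem_Icc {α : Type*} {S : Finset α} {x : α → ℝ}
    (hx : ∀ i ∈ S, x i ∈ Set.Icc 0 1) : (∑ i ∈ S, x i) / #S ∈ Set.Icc 0 1 :=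
  ⟨div_nonneg (sum_nonneg fun i hi => (hx i hi).1) (Nat.cast_nonneg _),
    div_le_one_of_le₀ (by simpa using sum_le_sum fun i hi => (hx i hi).2) (Nat.cast_nonneg _)⟩

lemma odds_sum_div_card_le_powersetCard {α : Type*} (s : Finset α) {m : ℕ} (hm : 0 < m)
    (hms : m ≤ #s) {x : α → ℝ} (hx : ∀ i ∈ s, x i ∈ Set.Icc 0 1) :
    odds ((∑ i ∈ s, x i) / #s) ≤
      (∑ S ∈ s.powersetCard m, odds ((∑ i ∈ S, x i) / m)) / #(s.powersetCard m) := by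
  rw [sum_div_card_eq_sum_powersetCard_div s hm hms]
  refine odds_sum_div_card_le (powersetCard_nonempty.2 hms) fun S hS => ?_
  obtain ⟨hSs, hSm⟩ := mem_powersetCard.1 hS
  simpa [hSm] using sum_div_card_mem_Icc fun i hi => hx i (hSs hi)

namespace ProbabilityTheory.iIndepFun

variable {Ω ι β : Type*} [MeasurableSpace Ω] {μ : Measure Ω} [AddCommMonoid β] [MeasurableSpace β]
  [MeasurableAdd₂ β] {ν : Measure β} {X : ι → Ω → β}

lemma map_sum_eq_map_pi (hindep : iIndepFun X μ) (hmeas : ∀ i, Measurable (X i))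
    (hlaw : ∀ i, μ.map (X i) = ν) {S : Finset ι} {k : ℕ} (hS : #S = k) :
    μ.map (fun ω => ∑ i ∈ S, X i ω) = (Measure.pi fun _ : Fin k => ν).map fun x => ∑ j, x j := by
  subst hS
  set e : Fin #S → ι := fun j => S.equivFin.symm j
  have he : e.Injective := Subtype.val_injective.comp S.equivFin.symm.injective
  have hsum : (fun ω => ∑ i ∈ S, X i ω) =
      (fun x : Fin #S → β => ∑ j, x j) ∘ fun ω j => X (e j) ω := by
    ext ω
    simp only [Function.comp_apply, e, ← sum_coe_sort S]
    exact (S.equivFin.symm.sum_comp fun i => X i ω).symm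
  rw [hsum, ← Measure.map_map (by fun_prop) (measurable_pi_lambda _ fun j => hmeas (e j)),
    (hindep.precomp he).map_fun_eq_pi_map fun j => (hmeas (e j)).aemeasurable]
  simp only [hlaw]

lemma identDistrib_sum_of_card_eq (hindep : iIndepFun X μ) (hmeas : ∀ i, Measurable (X i))
    (hlaw : ∀ i, μ.map (X i) = ν) {S T : Finset ι} (hST : #S = #T) :
    IdentDistrib (fun ω => ∑ i ∈ S, X i ω) (fun ω => ∑ i ∈ T, X i ω) μ μ where
  aemeasurable_fst := (Finset.measurable_sum S fun i _ => hmeas i).aemeasurable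
  aemeasurable_snd := (Finset.measurable_sum T fun i _ => hmeas i).aemeasurable
  map_eq := by
    rw [hindep.map_sum_eq_map_pi hmeas hlaw hST, hindep.map_sum_eq_map_pi hmeas hlaw rfl]

end ProbabilityTheory.iIndepFun

theorem condensation_monotone_in_convolution_general
    {Ω : Type*} [MeasurableSpace Ω] (μ : Measure Ω)
    (ν : Measure ℝ)
    (X : ℕ → Ω → ℝ) (hmeas : ∀ i, Measurable (X i))
    (hindep : iIndepFun X μ)
    (hlaw : ∀ i, μ.map (X i) = ν)
    (hsupp : ν (Set.Icc (0:ℝ) 1)ᶜ = 0)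
    (m₁ : ℕ) (hm₁ : 1 ≤ m₁) (hcond : meanRatioInt μ X m₁ < 1) :
    ∀ m₂, m₁ ≤ m₂ → meanRatioInt μ X m₂ < 1 := by
  intro m₂ h12
  set P := (range m₂).powersetCard m₁
  have hP : (#P : ℝ≥0∞) ≠ 0 := by
    simpa [P] using (Nat.choose_pos h12).ne'
  have hbounded : ∀ᵐ ω ∂μ, ∀ i, X i ω ∈ Set.Icc 0 1 :=
    ae_all_iff.2 fun i => ae_of_ae_map (hmeas i).aemeasurable (hlaw i ▸ mem_ae_iff.2 hsupp)
  have hsubset : ∀ S ∈ P, ∫⁻ ω, odds ((∑ i ∈ S, X i ω) / m₁) ∂μ = meanRatioInt μ X m₁ :=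
    fun S hS => ((hindep.identDistrib_sum_of_card_eq hmeas hlaw (T := range m₁)
      (by simp [(mem_powersetCard.1 hS).2])).comp (u := fun t => odds (t / m₁))
        (by fun_prop)).lintegral_eq
  rw [meanRatioInt_eq_lintegral_odds]
  calc ∫⁻ ω, odds ((∑ i ∈ range m₂, X i ω) / m₂) ∂μ
      ≤ ∫⁻ ω, (∑ S ∈ P, odds ((∑ i ∈ S, X i ω) / m₁)) / #P ∂μ := by
        refine lintegral_mono_ae (hbounded.mono fun ω hω => ?_)
        simpa only [card_range] using odds_sum_div_card_le_powersetCard (range m₂) hm₁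
          (by simpa using h12) fun i _ => hω i
    _ = (∑ S ∈ P, ∫⁻ ω, odds ((∑ i ∈ S, X i ω) / m₁) ∂μ) / #P := by
        simp only [div_eq_mul_inv]
        rw [lintegral_mul_const' _ _ (ENNReal.inv_ne_top.2 hP), lintegral_finsetSum]
        exact fun S _ => by fun_prop
    _ = meanRatioInt μ X m₁ := by
        rw [sum_congr rfl hsubset, sum_const, nsmul_eq_mul, mul_comm,
          ENNReal.mul_div_cancel_right hP (ENNReal.natCast_ne_top _)]
    _ < 1 := hcond

/-- If `E[X̄_{m₁}/(1-X̄_{m₁})] < 1` for some `m₁ ≥ 1` (i.e. `BB(m₁)` condensates),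
then `E[X̄_{m₂}/(1-X̄_{m₂})] < 1` for every `m₂ ≥ m₁` (i.e. `BB(m₂)` condensates). -/
theorem condensation_monotone_in_convolution
    {Ω : Type*} [MeasurableSpace Ω] (μ : Measure Ω) [IsProbabilityMeasure μ]
    (ν : Measure ℝ) [IsProbabilityMeasure ν]
    (X : ℕ → Ω → ℝ) (hmeas : ∀ i, Measurable (X i))
    (hindep : iIndepFun X μ)
    (hlaw : ∀ i, μ.map (X i) = ν)
    (hsupp : ν (Set.Icc (0:ℝ) 1)ᶜ = 0)
    (m₁ : ℕ) (hm₁ : 1 ≤ m₁) (hcond : meanRatioInt μ X m₁ < 1) :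
    ∀ m₂, m₁ ≤ m₂ → meanRatioInt μ X m₂ < 1 :=
  condensation_monotone_in_convolution_general μ ν X hmeas hindep hlaw hsupp m₁ hm₁ hcond
end

section
/- Let ν be a Borel probability measure on [0,1] and let (X_i)_{i≥1} be i.i.d. random variables with law ν; write X̄_m = (X₁+⋯+X_m)/m and μ = ∫₀¹ x dν(x). If μ ≥ 1/2, then for every m ≥ 1 one has E[X̄_m/(1−X̄_m)] ≥ 1; thus the condensation criterion E[X̄_m/(1−X̄_m)] < 1 fails for every convolution power m, exhibiting the phase transition at mean 1/2. -/
open MeasureTheory ProbabilityTheory Filter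
open scoped ENNReal

lemma ofReal_four_mul_sub_one_le_div (a : ℝ) :
    ENNReal.ofReal (4 * a - 1) ≤ ENNReal.ofReal a / ENNReal.ofReal (1 - a) := by
  rcases le_or_gt 1 a with ha | ha
  · have hdiv : ENNReal.ofReal a / ENNReal.ofReal (1 - a) = ⊤ := by
      rw [ENNReal.ofReal_of_nonpos (by linarith : 1 - a ≤ 0)]
      exact ENNReal.div_zero (ENNReal.ofReal_pos.2 (by linarith)).ne'
    simp [hdiv]
  · rw [← ENNReal.ofReal_div_of_pos (by linarith)]
    refine ENNReal.ofReal_le_ofReal ?_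
    have hpos : 0 < 1 - a := by linarith
    have hgap : a / (1 - a) - (4 * a - 1) = (2 * a - 1) ^ 2 / (1 - a) := by
      field_simp
      ring
    rw [← sub_nonneg, hgap]
    positivity

lemma ofReal_integral_le_lintegral_ofReal {α : Type*} [MeasurableSpace α] (μ : Measure α)
    (f : α → ℝ) : ENNReal.ofReal (∫ x, f x ∂μ) ≤ ∫⁻ x, ENNReal.ofReal (f x) ∂μ := by
  by_cases hf : Integrable f μ
  · calc ENNReal.ofReal (∫ x, f x ∂μ)
        ≤ ENNReal.ofReal (∫⁻ x, ENNReal.ofReal (f x) ∂μ).toReal := by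
          rw [integral_eq_lintegral_pos_part_sub_lintegral_neg_part hf]
          exact ENNReal.ofReal_le_ofReal (sub_le_self _ ENNReal.toReal_nonneg)
      _ ≤ ∫⁻ x, ENNReal.ofReal (f x) ∂μ := ENNReal.ofReal_toReal_le
  · simp [integral_undef hf]

lemma integral_sampleMean_eq {Ω : Type*} [MeasurableSpace Ω] (μ : Measure Ω) (ν : Measure ℝ)
    (X : ℕ → Ω → ℝ) (hmeas : ∀ i, Measurable (X i)) (hlaw : ∀ i, μ.map (X i) = ν)
    (hν : Integrable id ν) {m : ℕ} (hm : m ≠ 0) :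
    ∫ ω, (∑ i ∈ Finset.range m, X i ω) / m ∂μ = ∫ x, x ∂ν := by
  have hmean : ∀ i, ∫ ω, X i ω ∂μ = ∫ x, x ∂ν := fun i => by
    rw [← hlaw i, integral_map (hmeas i).aemeasurable (f := fun x => x) aestronglyMeasurable_id]
  have hint : ∀ i, Integrable (X i) μ := fun i => by
    rw [← hlaw i] at hν
    exact (integrable_map_measure aestronglyMeasurable_id (hmeas i).aemeasurable).1 hν
  rw [integral_div, integral_finsetSum _ fun i _ => hint i]
  simp only [hmean, Finset.sum_const, Finset.card_range, nsmul_eq_mul]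
  field_simp [(Nat.cast_ne_zero.2 hm : (m : ℝ) ≠ 0)]

theorem no_condensation_of_mean_ge_half_general
    {Ω : Type*} [MeasurableSpace Ω] (μ : Measure Ω) [IsProbabilityMeasure μ]
    (ν : Measure ℝ)
    (X : ℕ → Ω → ℝ) (hmeas : ∀ i, Measurable (X i))
    (hlaw : ∀ i, μ.map (X i) = ν)
    (hmean : (1 : ℝ) / 2 ≤ ∫ x, x ∂ν) :
    ∀ m : ℕ, 1 ≤ m → 1 ≤ meanRatioInt μ X m := by
  intro m hm
  set Xbar : Ω → ℝ := fun ω => (∑ i ∈ Finset.range m, X i ω) / m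
  -- a non-integrable function would have Bochner integral `0`
  have hν : Integrable id ν := Integrable.of_integral_ne_zero (by simp only [id]; linarith)
  have hXbar : ∫ ω, Xbar ω ∂μ = ∫ x, x ∂ν :=
    integral_sampleMean_eq μ ν X hmeas hlaw hν (by omega)
  have hXbar_int : Integrable Xbar μ := Integrable.of_integral_ne_zero (by linarith)
  calc (1 : ℝ≥0∞) ≤ ENNReal.ofReal (4 * ∫ x, x ∂ν - 1) := by
        rw [← ENNReal.ofReal_one]; exact ENNReal.ofReal_le_ofReal (by linarith)
    _ = ENNReal.ofReal (∫ ω, 4 * Xbar ω - 1 ∂μ) := by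
        rw [integral_sub (hXbar_int.const_mul 4) (integrable_const 1), integral_const_mul,
          hXbar, integral_const, probReal_univ, one_smul]
    _ ≤ ∫⁻ ω, ENNReal.ofReal (4 * Xbar ω - 1) ∂μ := ofReal_integral_le_lintegral_ofReal μ _
    _ ≤ meanRatioInt μ X m := lintegral_mono fun ω => ofReal_four_mul_sub_one_le_div (Xbar ω)

/-- If the mean increment satisfies `μ_ε = ∫₀¹ x dν(x) ≥ 1/2`, then for every `m ≥ 1`
one has `E[X̄_m/(1-X̄_m)] ≥ 1`: the condensation criterion `E[X̄_m/(1-X̄_m)] < 1`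
fails for every convolution power `m` (phase transition at mean `1/2`). -/
theorem no_condensation_of_mean_ge_half
    {Ω : Type*} [MeasurableSpace Ω] (μ : Measure Ω) [IsProbabilityMeasure μ]
    (ν : Measure ℝ) [IsProbabilityMeasure ν]
    (X : ℕ → Ω → ℝ) (hmeas : ∀ i, Measurable (X i))
    (hindep : iIndepFun X μ)
    (hlaw : ∀ i, μ.map (X i) = ν)
    (hsupp : ν (Set.Icc (0:ℝ) 1)ᶜ = 0)
    (hmean : (1 : ℝ) / 2 ≤ ∫ x, x ∂ν) :
    ∀ m : ℕ, 1 ≤ m → 1 ≤ meanRatioInt μ X m :=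
  no_condensation_of_mean_ge_half_general μ ν X hmeas hlaw hmean
end

section
/- Let X₁ and X₂ be i.i.d. random variables with values in [0,1]. If E[X₁/(1−X₁)] < 1, then E[(X₁+X₂)/(2−(X₁+X₂))] < 1; that is, if the condensation criterion holds for the fitness law ν, it also holds for its 2-fold convolution ν^{(2)} rescaled to mean average form. -/
/-!
The map `φ(x) = x / (1 - x)` is convex on `(-∞, 1)` and equals `∞` at `1`, so
`φ((x + y) / 2) ≤ (φ x + φ y) / 2` on `[0, 1]`, and `φ((x + y) / 2) = (x + y) / (2 - (x + y))`.
Integrating this and using that `φ(X₁)` and `φ(X₂)` have the same law gives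
`E[φ(X̄₂)] ≤ E[φ(X₁)] < 1`.
-/

open MeasureTheory ProbabilityTheory
open scoped ENNReal

lemma add_div_two_sub_add_le {x y : ℝ} (hx₁ : x < 1) (hy₁ : y < 1) :
    (x + y) / (2 - (x + y)) ≤ (x / (1 - x) + y / (1 - y)) / 2 := by
  have hx : 0 < 1 - x := sub_pos.2 hx₁
  have hy : 0 < 1 - y := sub_pos.2 hy₁
  rw [div_add_div _ _ hx.ne' hy.ne', div_div, div_le_div_iff₀ (by linarith) (by positivity)]
  nlinarith [sq_nonneg (x - y)]

lemma ofReal_add_div_ofReal_two_sub_le {x y : ℝ} (hx : x ∈ Set.Icc (0 : ℝ) 1)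
    (hy : y ∈ Set.Icc (0 : ℝ) 1) :
    ENNReal.ofReal (x + y) / ENNReal.ofReal (2 - (x + y)) ≤
      (ENNReal.ofReal x / ENNReal.ofReal (1 - x) +
        ENNReal.ofReal y / ENNReal.ofReal (1 - y)) / 2 := by
  obtain ⟨hx₀, hx₁⟩ := hx
  obtain ⟨hy₀, hy₁⟩ := hy
  obtain rfl | hx₁ := hx₁.eq_or_lt
  · simp [ENNReal.top_div]
  obtain rfl | hy₁ := hy₁.eq_or_lt
  · simp [ENNReal.top_div]
  have h2 : (2 : ℝ≥0∞) = ENNReal.ofReal 2 := by norm_num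
  rw [← ENNReal.ofReal_div_of_pos (by linarith), ← ENNReal.ofReal_div_of_pos (by linarith),
    ← ENNReal.ofReal_div_of_pos (by linarith), ← ENNReal.ofReal_add (by positivity) (by positivity),
    h2, ← ENNReal.ofReal_div_of_pos two_pos]
  exact ENNReal.ofReal_le_ofReal (add_div_two_sub_add_le hx₁ hy₁)

lemma ProbabilityTheory.IdentDistrib.lintegral_add_div_two {α : Type*} [MeasurableSpace α]
    {μ : Measure α} {f g : α → ℝ≥0∞} (h : IdentDistrib f g μ μ) :
    ∫⁻ a, (f a + g a) / 2 ∂μ = ∫⁻ a, f a ∂μ := by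
  simp only [div_eq_mul_inv]
  rw [lintegral_mul_const' _ _ (by simp), lintegral_add_left' h.aemeasurable_fst,
    ← h.lintegral_eq, ← two_mul, mul_comm, ← mul_assoc,
    ENNReal.inv_mul_cancel two_ne_zero ENNReal.ofNat_ne_top, one_mul]

theorem condensation_two_fold_convolution_general
    {Ω : Type*} [MeasurableSpace Ω] (μ : Measure Ω)
    (X₁ X₂ : Ω → ℝ) (hid : IdentDistrib X₁ X₂ μ μ)
    (hr₁ : ∀ ω, X₁ ω ∈ Set.Icc (0:ℝ) 1) (hr₂ : ∀ ω, X₂ ω ∈ Set.Icc (0:ℝ) 1)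
    (hcond : ∫⁻ ω, ENNReal.ofReal (X₁ ω) / ENNReal.ofReal (1 - X₁ ω) ∂μ < 1) :
    ∫⁻ ω, ENNReal.ofReal (X₁ ω + X₂ ω) /
      ENNReal.ofReal (2 - (X₁ ω + X₂ ω)) ∂μ < 1 := by
  set φ : ℝ → ℝ≥0∞ := fun x => ENNReal.ofReal x / ENNReal.ofReal (1 - x)
  have hφ : Measurable φ :=
    measurable_id.ennreal_ofReal.div (measurable_const.sub measurable_id).ennreal_ofReal
  calc ∫⁻ ω, ENNReal.ofReal (X₁ ω + X₂ ω) / ENNReal.ofReal (2 - (X₁ ω + X₂ ω)) ∂μ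
      ≤ ∫⁻ ω, (φ (X₁ ω) + φ (X₂ ω)) / 2 ∂μ :=
        lintegral_mono fun ω => ofReal_add_div_ofReal_two_sub_le (hr₁ ω) (hr₂ ω)
    _ = ∫⁻ ω, φ (X₁ ω) ∂μ := (hid.comp hφ).lintegral_add_div_two
    _ < 1 := hcond

/-- Let `X₁, X₂` be i.i.d. random variables with values in `[0,1]`.
If `E[X₁/(1-X₁)] < 1` (condensation criterion for the fitness law `ν`), then
`E[(X₁+X₂)/(2-(X₁+X₂))] < 1` (condensation criterion for the 2-fold convolution
`ν^{(2)}`); expectations are taken in `[0,∞]` with `x/(1-x) = ∞` when `x = 1`. -/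
theorem condensation_two_fold_convolution
    {Ω : Type*} [MeasurableSpace Ω] (μ : Measure Ω) [IsProbabilityMeasure μ]
    (X₁ X₂ : Ω → ℝ) (h₁ : Measurable X₁) (h₂ : Measurable X₂)
    (hind : IndepFun X₁ X₂ μ) (hid : IdentDistrib X₁ X₂ μ μ)
    (hr₁ : ∀ ω, X₁ ω ∈ Set.Icc (0:ℝ) 1) (hr₂ : ∀ ω, X₂ ω ∈ Set.Icc (0:ℝ) 1)
    (hcond : ∫⁻ ω, ENNReal.ofReal (X₁ ω) / ENNReal.ofReal (1 - X₁ ω) ∂μ < 1) :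
    ∫⁻ ω, ENNReal.ofReal (X₁ ω + X₂ ω) /
      ENNReal.ofReal (2 - (X₁ ω + X₂ ω)) ∂μ < 1 :=
  condensation_two_fold_convolution_general μ X₁ X₂ hid hr₁ hr₂ hcond
end
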